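/- On the Drinfel'd double D(g) = g × g*, the canonical symmetric bilinear pairing ⟨(X,α),(Y,β)⟩ := α(Y) + β(X) is invariant under the double bracket: for all u, v, w ∈ D(g) one has ⟨[u,v],w⟩ + ⟨v,[u,w]⟩ = 0. -/
import Mathlib


open TensorProduct

/-- On the Drinfel'd double `D(g) = g × g*`, the canonical symmetric pairing
`⟨(X,α),(Y,β)⟩ = α(Y) + β(X)` is invariant under the double bracket:
`⟨[u,v],w⟩ + ⟨v,[u,w]⟩ = 0`. -/
theorem drinfeld_double_pairing_invariant
    (g : Type*) [LieRing g] [LieAlgebra ℝ g] [FiniteDimensional ℝ g]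
    (br : Module.Dual ℝ g →ₗ[ℝ] Module.Dual ℝ g →ₗ[ℝ] Module.Dual ℝ g)
    (br_alt : ∀ α : Module.Dual ℝ g, br α α = 0)
    (br_jacobi : ∀ α β γ : Module.Dual ℝ g,
      br (br α β) γ + br (br β γ) α + br (br γ α) β = 0)
    (δ : g →ₗ[ℝ] g ⊗[ℝ] g)
    (hδ : ∀ (X : g) (α β : Module.Dual ℝ g),
      TensorProduct.lid ℝ ℝ (TensorProduct.map α β (δ X)) = br α β X)
    (cocycle : ∀ X Y : g,
      δ ⁅X, Y⁆ =
        (TensorProduct.map (LieAlgebra.ad ℝ g X : g →ₗ[ℝ] g) (LinearMap.id : g →ₗ[ℝ] g)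
            + TensorProduct.map (LinearMap.id : g →ₗ[ℝ] g) (LieAlgebra.ad ℝ g X : g →ₗ[ℝ] g)) (δ Y)
          - (TensorProduct.map (LieAlgebra.ad ℝ g Y : g →ₗ[ℝ] g) (LinearMap.id : g →ₗ[ℝ] g)
            + TensorProduct.map (LinearMap.id : g →ₗ[ℝ] g) (LieAlgebra.ad ℝ g Y : g →ₗ[ℝ] g)) (δ X))
    (a : Module.Dual ℝ g →ₗ[ℝ] g →ₗ[ℝ] g)
    (ha : ∀ (α : Module.Dual ℝ g) (X : g) (β : Module.Dual ℝ g),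
      β (a α X) = br α β X)
    (Dbr : g × Module.Dual ℝ g → g × Module.Dual ℝ g → g × Module.Dual ℝ g)
    (hDbr : ∀ (X Y : g) (α β : Module.Dual ℝ g),
      Dbr (X, α) (Y, β) =
        (⁅X, Y⁆ + a β X - a α Y,
          br α β + α ∘ₗ (LieAlgebra.ad ℝ g Y : g →ₗ[ℝ] g)
            - β ∘ₗ (LieAlgebra.ad ℝ g X : g →ₗ[ℝ] g))) :
    ∀ u v w : g × Module.Dual ℝ g,
      ((Dbr u v).2 w.1 + w.2 (Dbr u v).1) + (v.2 (Dbr u w).1 + (Dbr u w).2 v.1) = 0 := by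
  have hanti : ∀ p q : Module.Dual ℝ g, br p q = - br q p := by
    intro p q
    have h := br_alt (p + q)
    simp only [map_add, LinearMap.add_apply, br_alt] at h
    have h' : br p q + br q p = 0 := by
      rw [← h]; abel
    exact eq_neg_of_add_eq_zero_left h'
  rintro ⟨X, α⟩ ⟨Y, β⟩ ⟨Z, γ⟩
  rw [hDbr, hDbr]
  have h1 : br β γ X = - br γ β X := by rw [hanti β γ]; simp
  have h2 : α ⁅Z, Y⁆ = - α ⁅Y, Z⁆ := by rw [← lie_skew, map_neg]
  simp only [LinearMap.add_apply, LinearMap.sub_apply, LinearMap.comp_apply,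
    LieAlgebra.ad_apply, map_add, map_sub, ha, h1, h2]
  ring
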